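/- In a bicategory, let a : C ⟶ A, b : C ⟶ B, f : B ⟶ A, u : A ⟶ B, and c : B ⟶ C be 1-cells satisfying b ≫ f = a and a ≫ u = b. Suppose f ⊣ u is an adjunction whose counit whiskered with a equals (modulo the coherence isomorphisms) the identity 2-cell of a and whose unit whiskered with b equals (modulo the coherence isomorphisms) the identity 2-cell of b, and suppose c ⊣ b is an adjunction with unit ι : 𝟙 B ⟶ c ≫ b. Then the 2-cell f ⟶ c ≫ a obtained as the composite f ≅ 𝟙 B ≫ f ⟶ (c ≫ b) ≫ f ≅ c ≫ (b ≫ f) = c ≫ a (whiskering ι with f) exhibits c as an absolute left Kan lift of f along a. -/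

import Mathlib

/-!
Since `c ⊣ b`, the unit `ι` exhibits `c` as an absolute left Kan lift of `𝟙 B` along `b`.
The hypotheses on `f ⊣ u` make whiskering with `f` a bijection from 2-cells `h ⟶ ℓ ≫ b` onto
2-cells `h ≫ f ⟶ ℓ ≫ b ≫ f`, natural in `ℓ`, whose inverse is transposition along `f ⊣ u`
followed by the identification `b ≫ f ≫ u = b`. A natural bijection of this kind carries the
universal property of `ι` to that of `ι ▷ f`.
-/

namespace CategoryTheory.Bicategory

variable {𝒞 : Type*} [Bicategory 𝒞]

namespace LeftLift.IsKan

variable {A A' B C : 𝒞} {k : B ⟶ A} {g : C ⟶ A} {k' : B ⟶ A'} {g' : C ⟶ A'}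

def ofHomEquiv (e : ∀ ℓ : C ⟶ B, (g ⟶ ℓ ≫ k) ≃ (g' ⟶ ℓ ≫ k'))
    (he : ∀ {ℓ ℓ' : C ⟶ B} (θ : g ⟶ ℓ ≫ k) (τ : ℓ ⟶ ℓ'), e ℓ' (θ ≫ τ ▷ k) = e ℓ θ ≫ τ ▷ k')
    {t : LeftLift k g} (H : IsKan t) : IsKan (LeftLift.mk t.lift (e t.lift t.unit)) :=
  .mk (fun s ↦ LeftLift.homMk (H.desc (.mk s.lift ((e s.lift).symm s.unit))) <| by
      change e t.lift t.unit ≫ _ = _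
      rw [← he, H.fac]
      exact Equiv.apply_symm_apply _ _) <| by
    intro s τ
    ext
    apply H.hom_ext
    apply (e s.lift).injective
    change _ = e s.lift (t.unit ≫ H.desc (.mk s.lift ((e s.lift).symm s.unit)) ▷ k)
    rw [H.fac, he]
    exact (LeftLift.w τ).trans (Equiv.apply_symm_apply _ _).symm

end LeftLift.IsKan

namespace Adjunction

variable {A B C X : 𝒞} {f : B ⟶ A} {u : A ⟶ B} {b : C ⟶ B}

-- `E` stands in for the identity `(b ≫ f) ≫ u = b` of the main theorem, where `a = b ≫ f`.
def whiskerRightEquiv (adj : f ⊣ u) (E : (b ≫ f) ≫ u ⟶ b)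
    (hunit : b ◁ adj.unit ≫ (α_ b f u).inv ≫ E = (ρ_ b).hom)
    (hcounit : E ▷ f = (α_ (b ≫ f) u f).hom ≫ (b ≫ f) ◁ adj.counit ≫ (ρ_ (b ≫ f)).hom)
    (h : X ⟶ B) (ℓ : X ⟶ C) : (h ⟶ ℓ ≫ b) ≃ (h ≫ f ⟶ ℓ ≫ b ≫ f) where
  toFun Θ := Θ ▷ f ≫ (α_ ℓ b f).hom
  invFun θ :=
    (ρ_ h).inv ≫ h ◁ adj.unit ≫ (α_ h f u).inv ≫ θ ▷ u ≫ (α_ ℓ (b ≫ f) u).hom ≫ ℓ ◁ E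
  left_inv Θ :=
    calc _ = 𝟙 _ ⊗≫ (h ◁ adj.unit ≫ Θ ▷ (f ≫ u)) ⊗≫ ℓ ◁ E := by bicategory
      _ = 𝟙 _ ⊗≫ Θ ⊗≫ ℓ ◁ (b ◁ adj.unit ≫ (α_ b f u).inv ≫ E) ⊗≫ 𝟙 _ := by
        rw [whisker_exchange]; bicategory
      _ = Θ := by rw [hunit]; bicategory
  right_inv θ :=
    calc _ = 𝟙 _ ⊗≫ h ◁ adj.unit ▷ f ⊗≫ θ ▷ (u ≫ f) ⊗≫ ℓ ◁ (E ▷ f) ⊗≫ 𝟙 _ := by bicategory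
      _ = 𝟙 _ ⊗≫ h ◁ adj.unit ▷ f ⊗≫ (θ ▷ (u ≫ f) ≫ (ℓ ≫ b ≫ f) ◁ adj.counit) ⊗≫ 𝟙 _ := by
        rw [hcounit]; bicategory
      _ = 𝟙 _ ⊗≫ h ◁ leftZigzag adj.unit adj.counit ⊗≫ θ ⊗≫ 𝟙 _ := by
        rw [← whisker_exchange, leftZigzag]; bicategory
      _ = θ := by rw [adj.left_triangle]; bicategory

def isAbsoluteLeftKanLiftWhiskerRight (adj : f ⊣ u) (E : (b ≫ f) ≫ u ⟶ b)
    (hunit : b ◁ adj.unit ≫ (α_ b f u).inv ≫ E = (ρ_ b).hom)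
    (hcounit : E ▷ f = (α_ (b ≫ f) u f).hom ≫ (b ≫ f) ◁ adj.counit ≫ (ρ_ (b ≫ f)).hom)
    {c : B ⟶ C} (adj' : c ⊣ b) :
    (LeftLift.mk c ((λ_ f).inv ≫ adj'.unit ▷ f ≫ (α_ c b f).hom) :
      LeftLift (b ≫ f) f).IsAbsKan := fun {X} h ↦ by
  let e ℓ := ((ρ_ h).homCongr (Iso.refl _)).trans (whiskerRightEquiv adj E hunit hcounit h ℓ)
  have he {ℓ ℓ' : X ⟶ C} (θ : h ≫ 𝟙 B ⟶ ℓ ≫ b) (τ : ℓ ⟶ ℓ') :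
      e ℓ' (θ ≫ τ ▷ b) = e ℓ θ ≫ τ ▷ (b ≫ f) := by
    simp only [e, Equiv.trans_apply, Iso.homCongr_apply, whiskerRightEquiv, Equiv.coe_fn_mk]
    bicategory
  have unit_eq : h ◁ ((λ_ f).inv ≫ adj'.unit ▷ f ≫ (α_ c b f).hom) ≫ (α_ h c (b ≫ f)).inv =
      e (h ≫ c) (h ◁ adj'.unit ≫ (α_ h c b).inv) := by
    simp only [e, Equiv.trans_apply, Iso.homCongr_apply, whiskerRightEquiv, Equiv.coe_fn_mk]
    bicategory
  change (LeftLift.mk (h ≫ c)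
    (h ◁ ((λ_ f).inv ≫ adj'.unit ▷ f ≫ (α_ c b f).hom) ≫ (α_ h c (b ≫ f)).inv)).IsKan
  rw [unit_eq]
  exact LeftLift.IsKan.ofHomEquiv e he (adj'.isAbsoluteLeftKanLift h)

end Adjunction

end CategoryTheory.Bicategory

open CategoryTheory Simplicial Opposite MonoidalCategory CartesianMonoidalCategory

universe v₁ v₂ v₃ u₁ u₂ u₃

noncomputable section
namespace QCat

/-- The identity `n`-simplex of `Δ[n]` (formerly `SSet.standardSimplex.id`). -/
def standardSimplexId (n : ℕ) : Δ[n] _⦋n⦌ := SSet.yonedaEquiv (𝟙 Δ[n])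

/-! ## The internal hom of simplicial sets -/

/-- The internal hom of simplicial sets: an `n`-simplex of `sHom X A` is a map
`X ⊗ Δ[n] ⟶ A`. -/
def sHom (X A : SSet.{0}) : SSet.{0} where
  obj m := (X ⊗ SSet.stdSimplex.obj m.unop) ⟶ A
  map φ := ↾fun g => (X ◁ SSet.stdSimplex.map φ.unop) ≫ g
  map_id m := by apply ConcreteCategory.hom_ext; intro g; erw [CategoryTheory.Functor.map_id]; simp
  map_comp φ ψ := by apply ConcreteCategory.hom_ext; intro g; erw [CategoryTheory.Functor.map_comp]; simp [MonoidalCategory.whiskerLeft_comp]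

/-- constant map of simplicial sets to a standard simplex, at vertex `k` -/
def cnst (Y : SSet.{0}) {n : ℕ} (k : Fin (n+1)) : Y ⟶ Δ[n] where
  app m := ↾fun _ => SSet.stdSimplex.const n k m
  naturality _ _ _ := by
    apply ConcreteCategory.hom_ext; intro y
    apply (SSet.stdSimplex.objEquiv).injective
    apply SimplexCategory.Hom.ext
    ext x
    rfl

@[simp] lemma comp_cnst {X Y : SSet.{0}} (h : X ⟶ Y) {n : ℕ} (k : Fin (n+1)) :
    h ≫ cnst Y k = cnst X k := rfl

/-- inclusion of `Y` into the cylinder `Y ⊗ Δ[1]` at vertex `i`. -/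
def pt (i : Fin 2) (Y : SSet.{0}) : Y ⟶ Y ⊗ Δ[1] :=
  CartesianMonoidalCategory.lift (𝟙 Y) (cnst Y i)

lemma pt_natural (i : Fin 2) {X Y : SSet.{0}} (h : X ⟶ Y) :
    h ≫ pt i Y = pt i X ≫ (h ▷ Δ[1]) := by
  apply CartesianMonoidalCategory.hom_ext <;> simp [pt]

/-! ## The homotopy category of a simplicial set -/

lemma δ₁σ₀ (X : SSet.{0}) (x : X _⦋0⦌) : X.δ 1 (X.σ 0 x) = x := by
  change (X.σ 0 ≫ X.δ 1) x = x
  rw [SimplicialObject.δ_comp_σ_succ' (X := X) (j := 1) (i := 0) (by decide)]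
  rfl

lemma δ₀σ₀ (X : SSet.{0}) (x : X _⦋0⦌) : X.δ 0 (X.σ 0 x) = x := by
  change (X.σ 0 ≫ X.δ 0) x = x
  rw [SimplicialObject.δ_comp_σ_self' (X := X) (j := 0) (i := 0) (by decide)]
  rfl

lemma app_δ {X Y : SSet.{0}} (u : X ⟶ Y) {n : ℕ} (i : Fin (n+2)) (e : X _⦋n+1⦌) :
    u.app (op ⦋n⦌) (X.δ i e) = Y.δ i (u.app (op ⦋n+1⦌) e) :=
  ConcreteCategory.congr_hom (SimplicialObject.δ_naturality u i) e

lemma app_σ {X Y : SSet.{0}} (u : X ⟶ Y) {n : ℕ} (i : Fin (n+1)) (e : X _⦋n⦌) :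
    u.app (op ⦋n+1⦌) (X.σ i e) = Y.σ i (u.app (op ⦋n⦌) e) :=
  ConcreteCategory.congr_hom (SimplicialObject.σ_naturality u i) e

instance hoQuiver (X : SSet.{0}) : Quiver (X _⦋0⦌) :=
  ⟨fun x y => {e : X _⦋1⦌ // X.δ 1 e = x ∧ X.δ 0 e = y}⟩

/-- The degenerate edge at a vertex, as an arrow of the edge quiver. -/
def degEdge {X : SSet.{0}} (x : X _⦋0⦌) : x ⟶ x :=
  ⟨X.σ 0 x, δ₁σ₀ X x, δ₀σ₀ X x⟩

/-- The relation on the free category on the graph of vertices and edges of a simplicial set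
which is generated by the degenerate edges (which are related to identities) and the
2-simplices (which witness composition relations). -/
inductive HoRel (X : SSet.{0}) :
    ∀ (a b : Paths (X _⦋0⦌)), (a ⟶ b) → (a ⟶ b) → Prop where
  | id (x : X _⦋0⦌) :
      HoRel X ((Paths.of _).obj x) ((Paths.of _).obj x)
        (Quiver.Hom.toPath (degEdge x)) (𝟙 ((Paths.of _).obj x))
  /-- (this docstring separates the constructor from the `|X|` notation of `Simplicial`) -/
  | comp (σ : X _⦋2⦌) (a m b : X _⦋0⦌)
      (h2s : X.δ 1 (X.δ 2 σ) = a) (h2t : X.δ 0 (X.δ 2 σ) = m)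
      (h0s : X.δ 1 (X.δ 0 σ) = m) (h0t : X.δ 0 (X.δ 0 σ) = b)
      (h1s : X.δ 1 (X.δ 1 σ) = a) (h1t : X.δ 0 (X.δ 1 σ) = b) :
      HoRel X ((Paths.of _).obj a) ((Paths.of _).obj b)
        (Quiver.Hom.toPath (⟨X.δ 2 σ, h2s, h2t⟩ : a ⟶ m) ≫
          Quiver.Hom.toPath (⟨X.δ 0 σ, h0s, h0t⟩ : m ⟶ b))
        (Quiver.Hom.toPath ⟨X.δ 1 σ, h1s, h1t⟩)

/-- The homotopy category of a simplicial set: the free category on its vertices and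
edges, quotiented by the relations generated by degenerate edges and 2-simplices.
This realises the value at `X` of the left adjoint `h` of the nerve functor. -/
def Ho (X : SSet.{0}) : Type := CategoryTheory.Quotient (HoRel X)

/-- (instance search no longer finds `Quotient.category` for `HoRel X` by itself) -/
instance (X : SSet.{0}) : Category.{0} (CategoryTheory.Quotient (HoRel X)) :=
  CategoryTheory.Quotient.category (HoRel X)

instance (X : SSet.{0}) : Category.{0} (Ho X) :=
  inferInstanceAs (Category (CategoryTheory.Quotient (HoRel X)))

/-- The object of `Ho X` corresponding to a vertex of `X`. -/
def toHo {X : SSet.{0}} (x : X _⦋0⦌) : Ho X := ⟨(Paths.of _).obj x⟩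

/-- The morphism of `Ho X` represented by an edge of `X`, with specified endpoints. -/
def homOfEdge {X : SSet.{0}} (e : X _⦋1⦌) (x y : X _⦋0⦌)
    (hx : X.δ 1 e = x) (hy : X.δ 0 e = y) : toHo x ⟶ toHo y :=
  (Quotient.functor (HoRel X)).map (Quiver.Hom.toPath ⟨e, hx, hy⟩)

lemma homOfEdge_comp {X : SSet.{0}} (σ : X _⦋2⦌) (a m b : X _⦋0⦌)
    (h2s : X.δ 1 (X.δ 2 σ) = a) (h2t : X.δ 0 (X.δ 2 σ) = m)
    (h0s : X.δ 1 (X.δ 0 σ) = m) (h0t : X.δ 0 (X.δ 0 σ) = b)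
    (h1s : X.δ 1 (X.δ 1 σ) = a) (h1t : X.δ 0 (X.δ 1 σ) = b) :
    homOfEdge (X.δ 2 σ) a m h2s h2t ≫ homOfEdge (X.δ 0 σ) m b h0s h0t =
      homOfEdge (X.δ 1 σ) a b h1s h1t := by
  erw [homOfEdge, homOfEdge, homOfEdge, ← Functor.map_comp]
  exact CategoryTheory.Quotient.sound _ (HoRel.comp σ a m b h2s h2t h0s h0t h1s h1t)

lemma homOfEdge_deg {X : SSet.{0}} (x : X _⦋0⦌) :
    homOfEdge (X.σ 0 x) x x (δ₁σ₀ X x) (δ₀σ₀ X x) = 𝟙 (toHo x) := by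
  have h := CategoryTheory.Quotient.sound (HoRel X) (HoRel.id x)
  rw [homOfEdge]
  exact h.trans (CategoryTheory.Functor.map_id _ _)

/-- An edge of a simplicial set is an *isomorphism* if it becomes invertible
in the homotopy category. -/
def IsIsoEdge (X : SSet.{0}) (e : X _⦋1⦌) : Prop :=
  IsIso (homOfEdge e (X.δ 1 e) (X.δ 0 e) rfl rfl)

end QCat

namespace QCat
open CategoryTheory Simplicial Opposite MonoidalCategory CartesianMonoidalCategory

/-! ## Functoriality of the homotopy category -/

/-- The prefunctor on vertices and edges induced by a simplicial map. -/
def edgePre {X Y : SSet.{0}} (u : X ⟶ Y) : Prefunctor (X _⦋0⦌) (Y _⦋0⦌) where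
  obj x := u.app (op ⦋0⦌) x
  map {x y} e := ⟨u.app (op ⦋1⦌) e.1, by rw [← app_δ, e.2.1], by rw [← app_δ, e.2.2]⟩

/-- The functor on homotopy categories induced by a simplicial map. -/
def hoMap {X Y : SSet.{0}} (u : X ⟶ Y) : Ho X ⥤ Ho Y := by
  refine CategoryTheory.Quotient.lift (HoRel X)
    (Paths.lift ((edgePre u).comp
      (Prefunctor.comp (Paths.of _) (Quotient.functor (HoRel Y)).toPrefunctor))) ?_
  intro a b p q h
  induction h with
  | id x =>
    erw [Paths.lift_toPath, CategoryTheory.Functor.map_id]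
    have : (edgePre u).map (degEdge x) = degEdge (u.app (op ⦋0⦌) x) :=
      Subtype.ext (app_σ u 0 x)
    dsimp [Prefunctor.comp]
    erw [this]
    have h := CategoryTheory.Quotient.sound (HoRel Y) (HoRel.id (u.app (op ⦋0⦌) x))
    exact h.trans (CategoryTheory.Functor.map_id _ _)
  | comp σ a m b h2s h2t h0s h0t h1s h1t =>
    erw [Paths.lift_toPath, Functor.map_comp, Paths.lift_toPath, Paths.lift_toPath]
    dsimp [Prefunctor.comp]
    have e2 : (edgePre u).map (⟨X.δ 2 σ, h2s, h2t⟩ : a ⟶ m) =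
        ⟨Y.δ 2 (u.app (op ⦋2⦌) σ), by rw [← app_δ, ← app_δ, h2s]; rfl, by rw [← app_δ, ← app_δ, h2t]; rfl⟩ :=
      Subtype.ext (app_δ u 2 σ)
    have e0 : (edgePre u).map (⟨X.δ 0 σ, h0s, h0t⟩ : m ⟶ b) =
        ⟨Y.δ 0 (u.app (op ⦋2⦌) σ), by rw [← app_δ, ← app_δ, h0s]; rfl, by rw [← app_δ, ← app_δ, h0t]; rfl⟩ :=
      Subtype.ext (app_δ u 0 σ)
    have e1 : (edgePre u).map (⟨X.δ 1 σ, h1s, h1t⟩ : a ⟶ b) =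
        ⟨Y.δ 1 (u.app (op ⦋2⦌) σ), by rw [← app_δ, ← app_δ, h1s]; rfl, by rw [← app_δ, ← app_δ, h1t]; rfl⟩ :=
      Subtype.ext (app_δ u 1 σ)
    erw [e2, e0, e1]
    refine (Functor.map_comp (Quotient.functor (HoRel Y)) _ _).symm.trans ?_
    exact CategoryTheory.Quotient.sound _
      (HoRel.comp (u.app (op ⦋2⦌) σ) (u.app (op ⦋0⦌) a) (u.app (op ⦋0⦌) m) (u.app (op ⦋0⦌) b)
        (by rw [← app_δ, ← app_δ, h2s]) (by rw [← app_δ, ← app_δ, h2t])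
        (by rw [← app_δ, ← app_δ, h0s]) (by rw [← app_δ, ← app_δ, h0t])
        (by rw [← app_δ, ← app_δ, h1s]) (by rw [← app_δ, ← app_δ, h1t]))

@[simp] lemma hoMap_obj_toHo {X Y : SSet.{0}} (u : X ⟶ Y) (x : X _⦋0⦌) :
    (hoMap u).obj (toHo x) = toHo (u.app (op ⦋0⦌) x) := rfl

lemma hoMap_homOfEdge {X Y : SSet.{0}} (u : X ⟶ Y) (e : X _⦋1⦌) (x y : X _⦋0⦌)
    (hx : X.δ 1 e = x) (hy : X.δ 0 e = y) :
    (hoMap u).map (homOfEdge e x y hx hy) =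
      homOfEdge (u.app (op ⦋1⦌) e) (u.app (op ⦋0⦌) x) (u.app (op ⦋0⦌) y)
        (by rw [← hx, app_δ]) (by rw [← hy, app_δ]) := by
  dsimp only [hoMap, homOfEdge]
  erw [CategoryTheory.Quotient.lift_map_functor_map, Paths.lift_toPath]

end QCat

namespace QCat
open CategoryTheory Simplicial Opposite MonoidalCategory CartesianMonoidalCategory

/-! ## Smothering functors -/

/-- A functor is *smothering* if it is surjective on objects, full, and conservative. -/
structure IsSmothering {C D : Type*} [Category C] [Category D] (F : C ⥤ D) : Prop where
  obj_surj : ∀ d : D, ∃ c : C, F.obj c = d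
  full : ∀ {c c' : C} (g : F.obj c ⟶ F.obj c'), ∃ f : c ⟶ c', F.map f = g
  conservative : ∀ {c c' : C} (f : c ⟶ c'), IsIso (F.map f) → IsIso f

/-! ## Fibrations of simplicial sets -/

/-- A map of simplicial sets is an inner fibration if it has the right lifting property
with respect to all inner horn inclusions. -/
def IsInnerFibration {E B : SSet.{0}} (p : E ⟶ B) : Prop :=
  ∀ ⦃n : ℕ⦄ ⦃i : Fin (n+1)⦄, 0 < i → i < Fin.last n →
    HasLiftingProperty (Λ[n, i].ι) p

/-- The free-standing isomorphism: the groupoid with two objects and exactly one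
morphism in each hom-set. -/
def WIso : Type := Bool

instance : Groupoid WIso where
  Hom _ _ := PUnit
  id _ := PUnit.unit
  comp _ _ := PUnit.unit
  inv _ := PUnit.unit

/-- One of the two endpoint inclusions `Δ[0] ⟶ N(I)` into the nerve of the free-standing
isomorphism. -/
def ptWIso : Δ[0] ⟶ nerve WIso :=
  (SSet.yonedaEquiv (X := nerve WIso) (n := ⦋0⦌)).symm (ComposableArrows.mk₀ (false : WIso))

/-- An *isofibration* is a map (between quasi-categories) having the right lifting property
with respect to the inner horn inclusions and the endpoint inclusion `Δ[0] ⟶ N(I)`. -/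
def IsIsofibration {E B : SSet.{0}} (p : E ⟶ B) : Prop :=
  IsInnerFibration p ∧ HasLiftingProperty ptWIso p

/-- A *trivial fibration* is a map having the right lifting property with respect to
all boundary inclusions. -/
def IsTrivialFibration {E B : SSet.{0}} (p : E ⟶ B) : Prop :=
  ∀ n : ℕ, HasLiftingProperty (∂Δ[n].ι) p

/-! ## Terminal vertices -/

/-- The final vertex of `∂Δ[n+1]`. -/
def lastVtxBdry (n : ℕ) : (∂Δ[n+1] : SSet.{0}) _⦋0⦌ :=
  ⟨SSet.stdSimplex.const (n+1) (Fin.last (n+1)) (op ⦋0⦌), by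
    intro h
    obtain ⟨x, hx⟩ := h 0
    have := congrArg Fin.val hx
    simp [SSet.stdSimplex.asOrderHom, Fin.last] at this⟩

/-- A vertex `t` of a simplicial set `A` is *terminal in Joyal's sense* if every sphere
`∂Δ[n] ⟶ A` (`n ≥ 1`) whose final vertex is `t` can be filled to a simplex `Δ[n] ⟶ A`. -/
def IsTerminalVtx (A : SSet.{0}) (t : A _⦋0⦌) : Prop :=
  ∀ (n : ℕ) (s : (∂Δ[n+1] : SSet.{0}) ⟶ A), s.app (op ⦋0⦌) (lastVtxBdry n) = t →
    ∃ g : Δ[n+1] ⟶ A, ∂Δ[n+1].ι ≫ g = s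

end QCat

namespace QCat
open CategoryTheory Simplicial Opposite MonoidalCategory CartesianMonoidalCategory

/-! ## Yoneda lemmas -/

lemma yE_symm_naturality {B : SSet.{0}} {m m' : SimplexCategoryᵒᵖ} (φ : m ⟶ m') (x : B.obj m) :
    (SSet.yonedaEquiv (X := B) (n := m'.unop)).symm (B.map φ x) =
      SSet.stdSimplex.map φ.unop ≫ (SSet.yonedaEquiv (X := B) (n := m.unop)).symm x := by
  apply NatTrans.ext; funext k; apply ConcreteCategory.hom_ext; intro g
  change B.map (g.down).op (B.map φ x) = B.map (g.down ≫ φ.unop).op x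
  rw [← Functor.map_comp_apply]
  rfl

lemma yE_symm_comp {B B' : SSet.{0}} (r : B ⟶ B') {m : SimplexCategoryᵒᵖ} (x : B.obj m) :
    (SSet.yonedaEquiv (X := B') (n := m.unop)).symm (r.app m x) =
      (SSet.yonedaEquiv (X := B) (n := m.unop)).symm x ≫ r := by
  apply NatTrans.ext; funext k; apply ConcreteCategory.hom_ext; intro g
  exact (NatTrans.naturality_apply r (g.down).op x).symm

end QCat

namespace QCat
open CategoryTheory Simplicial Opposite MonoidalCategory CartesianMonoidalCategory

/-! ## Comma simplicial sets -/

/-- The comma simplicial set `f↓g` of a cospan `f : B ⟶ A`, `g : C ⟶ A`: an `n`-simplex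
is a triple `(c, b, α)` where `c` is an `n`-simplex of `C`, `b` is an `n`-simplex of `B`
and `α : Δ[n] ⊗ Δ[1] ⟶ A` restricts at vertex `0` of `Δ[1]` to `f ∘ b` and at vertex `1`
to `g ∘ c`.  This is a concrete model of the pullback of
`A^{Δ[1]} → A × A` along `g × f : C × B → A × A`. -/
def comma {A B C : SSet.{0}} (f : B ⟶ A) (g : C ⟶ A) : SSet.{0} where
  obj m := {p : (C.obj m × B.obj m) × ((SSet.stdSimplex.obj m.unop ⊗ Δ[1] : SSet.{0}) ⟶ A) //
      pt 0 (SSet.stdSimplex.obj m.unop) ≫ p.2 = (SSet.yonedaEquiv (X := B) (n := m.unop)).symm p.1.2 ≫ f ∧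
      pt 1 (SSet.stdSimplex.obj m.unop) ≫ p.2 = (SSet.yonedaEquiv (X := C) (n := m.unop)).symm p.1.1 ≫ g}
  map φ := ↾fun p => ⟨((C.map φ p.1.1.1, B.map φ p.1.1.2),
      (SSet.stdSimplex.map φ.unop ▷ Δ[1]) ≫ p.1.2), by
        rw [← Category.assoc, ← pt_natural, Category.assoc, p.2.1,
          yE_symm_naturality, Category.assoc], by
        rw [← Category.assoc, ← pt_natural, Category.assoc, p.2.2,
          yE_symm_naturality, Category.assoc]⟩
  map_id m := by
    apply ConcreteCategory.hom_ext; intro p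
    apply Subtype.ext
    refine Prod.ext (Prod.ext ?_ ?_) ?_ <;> simp <;> erw [CategoryTheory.Functor.map_id] <;> simp
  map_comp φ ψ := by
    apply ConcreteCategory.hom_ext; intro p
    apply Subtype.ext
    refine Prod.ext (Prod.ext ?_ ?_) ?_ <;>
      simp [MonoidalCategory.comp_whiskerRight] <;> erw [CategoryTheory.Functor.map_comp] <;>
      simp [MonoidalCategory.comp_whiskerRight]

/-- The projection `f↓g ⟶ B` (evaluation at the domain). -/
def commaP₀ {A B C : SSet.{0}} (f : B ⟶ A) (g : C ⟶ A) : comma f g ⟶ B where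
  app m := ↾fun p => p.1.1.2
  naturality _ _ _ := rfl

/-- The projection `f↓g ⟶ C` (evaluation at the codomain). -/
def commaP₁ {A B C : SSet.{0}} (f : B ⟶ A) (g : C ⟶ A) : comma f g ⟶ C where
  app m := ↾fun p => p.1.1.1
  naturality _ _ _ := rfl

/-- The map between comma simplicial sets induced by a map of cospans. -/
def commaMap {A B C A' B' C' : SSet.{0}} {f : B ⟶ A} {g : C ⟶ A}
    {f' : B' ⟶ A'} {g' : C' ⟶ A'} (q : A ⟶ A') (r : B ⟶ B') (s : C ⟶ C')
    (hf : f ≫ q = r ≫ f') (hg : g ≫ q = s ≫ g') :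
    comma f g ⟶ comma f' g' where
  app m := ↾fun p => ⟨((s.app m p.1.1.1, r.app m p.1.1.2), p.1.2 ≫ q), by
      rw [← Category.assoc, p.2.1, Category.assoc, hf, yE_symm_comp, Category.assoc], by
      rw [← Category.assoc, p.2.2, Category.assoc, hg, yE_symm_comp, Category.assoc]⟩
  naturality φ ψ := by
    intro ρ
    apply ConcreteCategory.hom_ext; intro p
    apply Subtype.ext
    refine Prod.ext (Prod.ext ?_ ?_) ?_
    · exact NatTrans.naturality_apply s _ _
    · exact NatTrans.naturality_apply r _ _
    · exact Category.assoc _ _ _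

end QCat

namespace QCat
open CategoryTheory Simplicial Opposite MonoidalCategory CartesianMonoidalCategory

/-! ## Adjunctions of quasi-categories -/

/-- An adjunction of quasi-categories `f ⊣ u` between quasi-categories `A` and `B`:
maps `f : B ⟶ A` and `u : A ⟶ B`, a unit `η` (a 1-simplex of `B^B` from the identity
to `u ∘ f`), a counit `ε` (a 1-simplex of `A^A` from `f ∘ u` to the identity), and
2-simplices `α` of `B^A` and `β` of `A^B` witnessing the two triangle identities. -/
structure QAdj (A B : SSet.{0}) (f : B ⟶ A) (u : A ⟶ B) : Type where
  /-- the unit, a `1`-simplex of `B^B` -/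
  η : (B ⊗ Δ[1] : SSet.{0}) ⟶ B
  /-- the counit, a `1`-simplex of `A^A` -/
  ε : (A ⊗ Δ[1] : SSet.{0}) ⟶ A
  η₀ : pt 0 B ≫ η = 𝟙 B
  η₁ : pt 1 B ≫ η = f ≫ u
  ε₀ : pt 0 A ≫ ε = u ≫ f
  ε₁ : pt 1 A ≫ ε = 𝟙 A
  /-- a `2`-simplex of `B^A` witnessing the triangle identity for `u` -/
  α : (A ⊗ Δ[2] : SSet.{0}) ⟶ B
  /-- a `2`-simplex of `A^B` witnessing the triangle identity for `f` -/
  β : (B ⊗ Δ[2] : SSet.{0}) ⟶ A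
  α₂ : (A ◁ SSet.stdSimplex.map (SimplexCategory.δ 2)) ≫ α = (u ▷ Δ[1]) ≫ η
  α₀ : (A ◁ SSet.stdSimplex.map (SimplexCategory.δ 0)) ≫ α = ε ≫ u
  α₁ : (A ◁ SSet.stdSimplex.map (SimplexCategory.δ 1)) ≫ α = fst A Δ[1] ≫ u
  β₂ : (B ◁ SSet.stdSimplex.map (SimplexCategory.δ 2)) ≫ β = η ≫ f
  β₀ : (B ◁ SSet.stdSimplex.map (SimplexCategory.δ 0)) ≫ β = (f ▷ Δ[1]) ≫ ε
  β₁ : (B ◁ SSet.stdSimplex.map (SimplexCategory.δ 1)) ≫ β = fst B Δ[1] ≫ f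

/-- The map `Δ[0] ⟶ A` corresponding to a vertex of `A`. -/
def vMap {A : SSet.{0}} (a : A _⦋0⦌) : Δ[0] ⟶ A :=
  (SSet.yonedaEquiv (X := A) (n := ⦋0⦌)).symm a

end QCat

namespace QCat
open CategoryTheory Simplicial Opposite MonoidalCategory CartesianMonoidalCategory

/-! ## Strict pullbacks of categories, and pullbacks of simplicial sets -/

/-- The strict pullback of two functors, formed in `Cat`. -/
structure CatPB {A : Type u₁} {B : Type u₂} {C : Type u₃}
    [Category.{v₁} A] [Category.{v₂} B] [Category.{v₃} C]
    (F : B ⥤ A) (G : C ⥤ A) : Type (max u₂ u₃) where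
  b : B
  c : C
  w : F.obj b = G.obj c

instance CatPB.category {A : Type u₁} {B : Type u₂} {C : Type u₃}
    [Category.{v₁} A] [Category.{v₂} B] [Category.{v₃} C]
    (F : B ⥤ A) (G : C ⥤ A) : Category.{max v₂ v₃} (CatPB F G) where
  Hom p q := {φ : (p.b ⟶ q.b) × (p.c ⟶ q.c) //
    F.map φ.1 = eqToHom p.w ≫ G.map φ.2 ≫ eqToHom q.w.symm}
  id p := ⟨(𝟙 p.b, 𝟙 p.c), by
    rw [CategoryTheory.Functor.map_id, CategoryTheory.Functor.map_id]
    simp⟩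
  comp φ ψ := ⟨(φ.1.1 ≫ ψ.1.1, φ.1.2 ≫ ψ.1.2), by
    rw [CategoryTheory.Functor.map_comp, CategoryTheory.Functor.map_comp, φ.2, ψ.2]
    simp⟩
  id_comp φ := by
    apply Subtype.ext
    apply Prod.ext <;> simp
  comp_id φ := by
    apply Subtype.ext
    apply Prod.ext <;> simp
  assoc φ ψ ρ := by
    apply Subtype.ext
    apply Prod.ext <;> simp

/-- The concrete pullback of a cospan of simplicial sets. -/
def sPullback {A B C : SSet.{0}} (f : B ⟶ A) (g : C ⟶ A) : SSet.{0} where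
  obj m := {p : B.obj m × C.obj m // f.app m p.1 = g.app m p.2}
  map φ := ↾fun p => ⟨(B.map φ p.1.1, C.map φ p.1.2), by
    rw [NatTrans.naturality_apply f, NatTrans.naturality_apply g, p.2]⟩
  map_id m := by apply ConcreteCategory.hom_ext; intro p; apply Subtype.ext; simp
  map_comp φ ψ := by apply ConcreteCategory.hom_ext; intro p; apply Subtype.ext; simp

end QCat

namespace QCat
open CategoryTheory Simplicial Opposite MonoidalCategory CartesianMonoidalCategory

/-! ## A universal property for `Ho` -/

/-- Construct a functor out of the homotopy category of a simplicial set from a prefunctor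
defined on vertices and edges which sends degenerate edges to identities and composites
witnessed by 2-simplices to composites. -/
def hoLift {X : SSet.{0}} {D : Type*} [Category D] (φ : Prefunctor (X _⦋0⦌) D)
    (hid : ∀ x : X _⦋0⦌, φ.map (degEdge x) = 𝟙 (φ.obj x))
    (hcomp : ∀ (σ : X _⦋2⦌) (a m b : X _⦋0⦌)
      (h2s : X.δ 1 (X.δ 2 σ) = a) (h2t : X.δ 0 (X.δ 2 σ) = m)
      (h0s : X.δ 1 (X.δ 0 σ) = m) (h0t : X.δ 0 (X.δ 0 σ) = b)
      (h1s : X.δ 1 (X.δ 1 σ) = a) (h1t : X.δ 0 (X.δ 1 σ) = b),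
      φ.map (⟨X.δ 2 σ, h2s, h2t⟩ : a ⟶ m) ≫ φ.map (⟨X.δ 0 σ, h0s, h0t⟩ : m ⟶ b) =
        φ.map (⟨X.δ 1 σ, h1s, h1t⟩ : a ⟶ b)) :
    Ho X ⥤ D :=
  CategoryTheory.Quotient.lift _ (Paths.lift φ) (by
    intro a b p q h
    induction h with
    | id x =>
      erw [Paths.lift_toPath, CategoryTheory.Functor.map_id]
      exact hid x
    | comp σ a m b h2s h2t h0s h0t h1s h1t =>
      erw [CategoryTheory.Functor.map_comp, Paths.lift_toPath, Paths.lift_toPath,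
        Paths.lift_toPath]
      exact hcomp σ a m b h2s h2t h0s h0t h1s h1t)

@[simp] lemma hoLift_obj_toHo {X : SSet.{0}} {D : Type*} [Category D]
    (φ : Prefunctor (X _⦋0⦌) D) (hid) (hcomp) (x : X _⦋0⦌) :
    (hoLift φ hid hcomp).obj (toHo x) = φ.obj x := rfl

lemma hoLift_map_homOfEdge {X : SSet.{0}} {D : Type*} [Category D]
    (φ : Prefunctor (X _⦋0⦌) D) (hid) (hcomp) (e : X _⦋1⦌) (x y : X _⦋0⦌)
    (hx : X.δ 1 e = x) (hy : X.δ 0 e = y) :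
    (hoLift φ hid hcomp).map (homOfEdge e x y hx hy) = φ.map ⟨e, hx, hy⟩ := by
  dsimp only [hoLift, homOfEdge]
  erw [CategoryTheory.Quotient.lift_map_functor_map, Paths.lift_toPath]
  rfl

lemma homOfEdge_eq {X : SSet.{0}} {e e' : X _⦋1⦌} (h : e = e') {x y x' y' : X _⦋0⦌}
    (hx : X.δ 1 e = x) (hy : X.δ 0 e = y) (hx' : X.δ 1 e' = x') (hy' : X.δ 0 e' = y')
    (hxx : toHo x = toHo x') (hyy : toHo y = toHo y') :
    homOfEdge e x y hx hy = eqToHom hxx ≫ homOfEdge e' x' y' hx' hy' ≫ eqToHom hyy.symm := by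
  subst h
  subst hx hy hx' hy'
  simp

end QCat

namespace QCat
open CategoryTheory Simplicial Opposite MonoidalCategory CartesianMonoidalCategory

/-! ## The comparison functor for pullbacks -/

/-- The canonical comparison prefunctor from the vertices and edges of `B ×_A C` to the
strict pullback of homotopy categories. -/
def cmpPBPre {A B C : SSet.{0}} (f : B ⟶ A) (g : C ⟶ A) :
    Prefunctor ((sPullback f g) _⦋0⦌) (CatPB (hoMap f) (hoMap g)) where
  obj p := ⟨toHo p.1.1, toHo p.1.2, congrArg toHo p.2⟩
  map {p q} E :=
    ⟨(homOfEdge E.1.1.1 p.1.1 q.1.1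
        (congrArg (fun z => z.1.1) E.2.1) (congrArg (fun z => z.1.1) E.2.2),
      homOfEdge E.1.1.2 p.1.2 q.1.2
        (congrArg (fun z => z.1.2) E.2.1) (congrArg (fun z => z.1.2) E.2.2)), by
      erw [hoMap_homOfEdge f E.1.1.1 p.1.1 q.1.1
          (congrArg (fun z => z.1.1) E.2.1) (congrArg (fun z => z.1.1) E.2.2),
        hoMap_homOfEdge g E.1.1.2 p.1.2 q.1.2
          (congrArg (fun z => z.1.2) E.2.1) (congrArg (fun z => z.1.2) E.2.2)]
      exact homOfEdge_eq E.1.2 _ _ _ _ (congrArg toHo p.2) (congrArg toHo q.2)⟩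

/-- The canonical comparison functor `h(B ×_A C) ⥤ hB ×_{hA} hC`. -/
def cmpPB {A B C : SSet.{0}} (f : B ⟶ A) (g : C ⟶ A) :
    Ho (sPullback f g) ⥤ CatPB (hoMap f) (hoMap g) :=
  hoLift (cmpPBPre f g)
    (fun p => by
      apply Subtype.ext
      apply Prod.ext
      · exact homOfEdge_deg p.1.1
      · exact homOfEdge_deg p.1.2)
    (fun σ a m b h2s h2t h0s h0t h1s h1t => by
      apply Subtype.ext
      apply Prod.ext
      · exact homOfEdge_comp σ.1.1 a.1.1 m.1.1 b.1.1
          (congrArg (fun z => z.1.1) h2s) (congrArg (fun z => z.1.1) h2t)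
          (congrArg (fun z => z.1.1) h0s) (congrArg (fun z => z.1.1) h0t)
          (congrArg (fun z => z.1.1) h1s) (congrArg (fun z => z.1.1) h1t)
      · exact homOfEdge_comp σ.1.2 a.1.2 m.1.2 b.1.2
          (congrArg (fun z => z.1.2) h2s) (congrArg (fun z => z.1.2) h2t)
          (congrArg (fun z => z.1.2) h0s) (congrArg (fun z => z.1.2) h0t)
          (congrArg (fun z => z.1.2) h1s) (congrArg (fun z => z.1.2) h1t))

end QCat

namespace QCat
open CategoryTheory Simplicial Opposite MonoidalCategory CartesianMonoidalCategory

/-! ## Evaluation of simplices of internal homs -/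

/-- The edge of `A` obtained by evaluating a `1`-simplex of `A^X` at a vertex of `X`. -/
def evalEdge {X A : SSet.{0}} (k : (X ⊗ Δ[1] : SSet.{0}) ⟶ A) (x : X _⦋0⦌) : A _⦋1⦌ :=
  k.app (op ⦋1⦌) (X.σ 0 x, QCat.standardSimplexId 1)

/-- The generic `m`-simplex of the standard simplex `Δ[m]`. -/
def genSimp (m : SimplexCategoryᵒᵖ) : (SSet.stdSimplex.obj m.unop).obj m :=
  (SSet.stdSimplex.objEquiv (n := m.unop) (m := m)).symm (𝟙 m.unop)

lemma ptΔ_eq {n : ℕ} (x y : Δ[n] _⦋0⦌) (h : (SSet.stdSimplex.asOrderHom x) 0 = (SSet.stdSimplex.asOrderHom y) 0) :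
    x = y := by
  apply (SSet.stdSimplex.objEquiv).injective
  apply SimplexCategory.Hom.ext
  apply OrderHom.ext
  funext i
  fin_cases i
  exact h

lemma map_const {n : ℕ} (k : Fin (n+1)) {m m' : SimplexCategoryᵒᵖ} (φ : m ⟶ m') :
    Δ[n].map φ (SSet.stdSimplex.const n k m) = SSet.stdSimplex.const n k m' := by
  apply (SSet.stdSimplex.objEquiv).injective
  apply SimplexCategory.Hom.ext
  apply OrderHom.ext
  funext i
  rfl

/-- Evaluation of `A^{Δ[1]}` at a vertex of the exponent `Δ[1]`. -/
def evV {A : SSet.{0}} (i : Fin 2) : sHom Δ[1] A ⟶ A where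
  app m := ↾fun k => k.app m (SSet.stdSimplex.const 1 i m, genSimp m)
  naturality {m m'} φ := by
    apply ConcreteCategory.hom_ext; intro k
    change (k.app m' _ : A.obj m') = A.map φ (k.app m _)
    erw [← NatTrans.naturality_apply k φ]
    congr 1

end QCat

namespace QCat
open CategoryTheory Simplicial Opposite MonoidalCategory CartesianMonoidalCategory

/-! ## Functors into arrow and comma categories from natural transformations -/

/-- The functor into the arrow category determined by a natural transformation. -/
def toArrowFunctor {C D : Type*} [Category C] [Category D] {F G : C ⥤ D} (ν : F ⟶ G) :
    C ⥤ Arrow D where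
  obj c := Arrow.mk (ν.app c)
  map {c c'} φ := Arrow.homMk (u := F.map φ) (v := G.map φ) (ν.naturality φ)
  map_id c := by
    apply CommaMorphism.ext <;> simp
  map_comp φ ψ := by
    apply CommaMorphism.ext <;> simp

/-- The functor into a comma category determined by a natural transformation. -/
def toCommaFunctor {C D E T : Type*} [Category C] [Category D] [Category E] [Category T]
    {L : D ⥤ T} {R : E ⥤ T} {P : C ⥤ D} {Q : C ⥤ E} (ν : P ⋙ L ⟶ Q ⋙ R) :
    C ⥤ Comma L R where
  obj c := ⟨P.obj c, Q.obj c, ν.app c⟩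
  map {c c'} φ := ⟨P.map φ, Q.map φ, ν.naturality φ⟩
  map_id c := by
    apply CommaMorphism.ext <;> simp
  map_comp φ ψ := by
    apply CommaMorphism.ext <;> simp

end QCat

namespace QCat
open CategoryTheory Simplicial Opposite MonoidalCategory CartesianMonoidalCategory

/-! ## Pre- and post-composition on internal homs -/

/-- Postcomposition map on internal homs. -/
def postW (X : SSet.{0}) {B A : SSet.{0}} (p : B ⟶ A) : sHom X B ⟶ sHom X A where
  app m := ↾fun g => g ≫ p
  naturality {m m'} φ := by
    apply ConcreteCategory.hom_ext; intro g
    show ((X ◁ SSet.stdSimplex.map φ.unop) ≫ g) ≫ p =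
      (X ◁ SSet.stdSimplex.map φ.unop) ≫ (g ≫ p)
    erw [Category.assoc]

/-- Precomposition map on internal homs. -/
def preW {A B : SSet.{0}} (w : A ⟶ B) (C : SSet.{0}) : sHom B C ⟶ sHom A C where
  app m := ↾fun g => (w ▷ SSet.stdSimplex.obj m.unop) ≫ g
  naturality {m m'} φ := by
    apply ConcreteCategory.hom_ext; intro g
    show (w ▷ SSet.stdSimplex.obj m'.unop) ≫ ((B ◁ SSet.stdSimplex.map φ.unop) ≫ g) =
      (A ◁ SSet.stdSimplex.map φ.unop) ≫ ((w ▷ SSet.stdSimplex.obj m.unop) ≫ g)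
    erw [← Category.assoc]

end QCat

namespace QCat
open CategoryTheory Simplicial Opposite MonoidalCategory CartesianMonoidalCategory

/-! ## Distinguished vertices of comma quasi-categories -/

/-- The vertex of the comma quasi-category `f↓a` determined by the vertex `u(a)` together
with the `1`-simplex `ε ∘ (a × Δ[1]) : f(u(a)) → a`, the component of the counit at `a`. -/
def counitVtx {A B : SSet.{0}} {f : B ⟶ A} {u : A ⟶ B} (adj : QAdj A B f u) (a : A _⦋0⦌) :
    (comma f (vMap a)) _⦋0⦌ :=
  ⟨((QCat.standardSimplexId 0, u.app (op ⦋0⦌) a), (vMap a ▷ Δ[1]) ≫ adj.ε), by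
    constructor
    · rw [← Category.assoc, ← pt_natural, Category.assoc, adj.ε₀]
      show _ = (SSet.yonedaEquiv (X := B) (n := ⦋0⦌)).symm (u.app (op ⦋0⦌) a) ≫ f
      rw [yE_symm_comp u a, Category.assoc]
      rfl
    · rw [← Category.assoc, ← pt_natural, Category.assoc, adj.ε₁, Category.comp_id]
      show vMap a = (SSet.yonedaEquiv (X := Δ[0]) (n := ⦋0⦌)).symm (QCat.standardSimplexId 0) ≫ vMap a
      rw [QCat.standardSimplexId, Equiv.symm_apply_apply, Category.id_comp]⟩

/-- The vertex of the comma quasi-category `A↓a` determined by the vertex `a` together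
with the degenerate `1`-simplex at `a`. -/
def idVtx {A : SSet.{0}} (a : A _⦋0⦌) : (comma (𝟙 A) (vMap a)) _⦋0⦌ :=
  ⟨((QCat.standardSimplexId 0, a), fst Δ[0] Δ[1] ≫ vMap a), by
    constructor
    · rw [← Category.assoc]
      show (𝟙 _) ≫ vMap a = (SSet.yonedaEquiv (X := A) (n := ⦋0⦌)).symm a ≫ 𝟙 A
      rw [Category.id_comp, Category.comp_id]
      rfl
    · rw [← Category.assoc]
      show (𝟙 _) ≫ vMap a = (SSet.yonedaEquiv (X := Δ[0]) (n := ⦋0⦌)).symm (QCat.standardSimplexId 0) ≫ vMap a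
      rw [Category.id_comp, QCat.standardSimplexId, Equiv.symm_apply_apply, Category.id_comp]⟩

/-! ## Fibred equivalences between `f↓A` and `B↓u` -/

/-- The data of an equivalence, fibred over `A × B`, between the comma quasi-categories
`f↓A` and `B↓u`. -/
structure CommaEquivFibred {A B : SSet.{0}} (f : B ⟶ A) (u : A ⟶ B) : Type where
  /-- a map `B↓u ⟶ f↓A` over `A × B` -/
  w : comma (𝟙 B) u ⟶ comma f (𝟙 A)
  /-- a map `f↓A ⟶ B↓u` over `A × B` -/
  w' : comma f (𝟙 A) ⟶ comma (𝟙 B) u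
  hw₁ : w ≫ commaP₁ f (𝟙 A) = commaP₁ (𝟙 B) u
  hw₀ : w ≫ commaP₀ f (𝟙 A) = commaP₀ (𝟙 B) u
  hw'₁ : w' ≫ commaP₁ (𝟙 B) u = commaP₁ f (𝟙 A)
  hw'₀ : w' ≫ commaP₀ (𝟙 B) u = commaP₀ f (𝟙 A)
  /-- a `1`-simplex of `(f↓A)^{f↓A}` whose two vertices are `w ∘ w'` and the identity -/
  H : (comma f (𝟙 A) ⊗ Δ[1] : SSet.{0}) ⟶ comma f (𝟙 A)
  hH : (pt 0 _ ≫ H = w' ≫ w ∧ pt 1 _ ≫ H = 𝟙 _) ∨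
       (pt 0 _ ≫ H = 𝟙 _ ∧ pt 1 _ ≫ H = w' ≫ w)
  hHiso : IsIsoEdge (sHom (comma f (𝟙 A)) (comma f (𝟙 A))) H
  hH₁ : H ≫ commaP₁ f (𝟙 A) = fst _ _ ≫ commaP₁ f (𝟙 A)
  hH₀ : H ≫ commaP₀ f (𝟙 A) = fst _ _ ≫ commaP₀ f (𝟙 A)
  /-- a `1`-simplex of `(B↓u)^{B↓u}` whose two vertices are `w' ∘ w` and the identity -/
  K : (comma (𝟙 B) u ⊗ Δ[1] : SSet.{0}) ⟶ comma (𝟙 B) u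
  hK : (pt 0 _ ≫ K = w ≫ w' ∧ pt 1 _ ≫ K = 𝟙 _) ∨
       (pt 0 _ ≫ K = 𝟙 _ ∧ pt 1 _ ≫ K = w ≫ w')
  hKiso : IsIsoEdge (sHom (comma (𝟙 B) u) (comma (𝟙 B) u)) K
  hK₁ : K ≫ commaP₁ (𝟙 B) u = fst _ _ ≫ commaP₁ (𝟙 B) u
  hK₀ : K ≫ commaP₀ (𝟙 B) u = fst _ _ ≫ commaP₀ (𝟙 B) u

end QCat

namespace QCat
open CategoryTheory Bicategory

/-- Given `b ≫ f = a` and `a ≫ u = b`, an adjunction `f ⊣ u` under `C` (the counit and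
unit whisker to identities modulo coherence) and an adjunction `c ⊣ b` with unit `ι`,
the 2-cell `f ⟶ c ≫ a` obtained by whiskering `ι` with `f` exhibits `c` as an absolute
left Kan lift of `f` along `a`. -/
theorem statement12 {𝒞 : Type*} [Bicategory 𝒞] {A B C : 𝒞}
    (a : C ⟶ A) (b : C ⟶ B) (f : B ⟶ A) (u : A ⟶ B) (c : B ⟶ C)
    (hbf : b ≫ f = a) (hau : a ≫ u = b)
    (adj : Bicategory.Adjunction f u)
    (hcounit : a ◁ adj.counit ≫ (Bicategory.rightUnitor a).hom =
      (Bicategory.associator a u f).inv ≫ eqToHom (by rw [hau, hbf]))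
    (hunit : b ◁ adj.unit ≫ (Bicategory.associator b f u).inv ≫
      eqToHom (by rw [hbf, hau]) = (Bicategory.rightUnitor b).hom)
    (adj2 : Bicategory.Adjunction c b) :
    Nonempty ((Bicategory.LeftLift.mk c
      ((Bicategory.leftUnitor f).inv ≫ adj2.unit ▷ f ≫ (Bicategory.associator c b f).hom ≫
        eqToHom (by rw [hbf]))).IsAbsKan) := by
  subst hbf
  simp only [eqToHom_refl, Category.comp_id]
  refine ⟨adj.isAbsoluteLeftKanLiftWhiskerRight (eqToHom hau) hunit ?_ adj2⟩
  rw [hcounit, Bicategory.eqToHom_whiskerRight, Iso.hom_inv_id_assoc]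
end QCat
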